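/- For every ε ∈ (0,1), every real c₃ ≥ 2, and every integer k ≥ 2, with I₀(ε, k) = ( c₃ · (k·2^k/ε) · log(k·2^k/ε) )^{2^{k−1}}, one has I₀(ε, k+1) ≥ ( I₀(ε/2, k) + k )². -/

import Mathlib

/-- The threshold `I₀(ε,k) = (c₃·(k·2^k/ε)·log(k·2^k/ε))^{2^{k−1}}`. -/
noncomputable def Ithr (c₃ ε : ℝ) (k : ℕ) : ℝ :=
  (c₃ * ((k * 2 ^ k) / ε) * Real.log ((k * 2 ^ k) / ε)) ^ (2 ^ (k - 1))

lemma two_mul_le_two_pow' {k : ℕ} (hk : 2 ≤ k) : 2 * k ≤ 2 ^ k := by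
  induction k with
  | zero => omega
  | succ n ih =>
    rcases Nat.lt_or_ge n 2 with h | h
    · interval_cases n <;> norm_num
    · have h1 := ih h
      have h2 : 2 ≤ 2 ^ n := Nat.one_lt_two_pow_iff.mpr (by omega)
      have : 2 ^ (n + 1) = 2 ^ n + 2 ^ n := by ring
      omega

/-- Super-multiplicativity of the threshold: `I₀(ε, k+1) ≥ (I₀(ε/2, k) + k)²`. -/
theorem Ithr_supermultiplicative (ε : ℝ) (hε : ε ∈ Set.Ioo (0 : ℝ) 1)
    (c₃ : ℝ) (hc₃ : 2 ≤ c₃) (k : ℕ) (hk : 2 ≤ k) :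
    Ithr c₃ ε (k + 1) ≥ (Ithr c₃ (ε / 2) k + k) ^ 2 := by
  obtain ⟨hε0, hε1⟩ := hε
  have hk2 : (2 : ℝ) ≤ (k : ℝ) := by exact_mod_cast hk
  have hk0 : (0 : ℝ) < (k : ℝ) := by linarith
  have hkne : (k : ℝ) ≠ 0 := ne_of_gt hk0
  obtain ⟨x, hxdef⟩ : ∃ x : ℝ, x = (k : ℝ) * 2 ^ k / ε := ⟨_, rfl⟩
  have h2k : (4 : ℝ) ≤ 2 ^ k := by
    calc (4 : ℝ) = 2 ^ 2 := by norm_num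
    _ ≤ 2 ^ k := pow_le_pow_right₀ (by norm_num) hk
  have hxk : 4 * (k : ℝ) ≤ x := by
    rw [hxdef, le_div_iff₀ hε0]
    nlinarith
  have hx8 : (8 : ℝ) ≤ x := by nlinarith
  have hL2 : (2 : ℝ) ≤ Real.log (2 * x) := by
    have h16 : (2 : ℝ) ≤ Real.log 16 := by
      have h := Real.log_two_gt_d9
      have h4 : Real.log 16 = 4 * Real.log 2 := by
        rw [show (16 : ℝ) = 2 ^ 4 by norm_num, Real.log_pow]; push_cast; ring
      linarith
    have := Real.log_le_log (by norm_num : (0:ℝ) < 16) (by linarith : (16:ℝ) ≤ 2 * x)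
    linarith
  obtain ⟨b, hbdef⟩ : ∃ b : ℝ, b = c₃ * (2 * x) * Real.log (2 * x) := ⟨_, rfl⟩
  have hbk : (k : ℝ) ≤ b := by
    have h1 : (2 : ℝ) * (2 * x) * 2 ≤ c₃ * (2 * x) * Real.log (2 * x) := by
      gcongr <;> linarith
    rw [hbdef]; nlinarith
  have hb1 : (1 : ℝ) ≤ b := by linarith
  have hb0 : (0 : ℝ) < b := by linarith
  -- rewrite Ithr (ε/2) k
  have harg : (k : ℝ) * 2 ^ k / (ε / 2) = 2 * x := by
    rw [hxdef]; field_simp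
  have hIk : Ithr c₃ (ε / 2) k = b ^ (2 ^ (k - 1)) := by
    unfold Ithr; rw [harg, ← hbdef]
  -- rewrite Ithr ε (k+1)
  obtain ⟨r, hrdef⟩ : ∃ r : ℝ, r = 1 + 1 / (k : ℝ) := ⟨_, rfl⟩
  have hr1 : (1 : ℝ) ≤ r := by
    have : 0 < 1 / (k : ℝ) := by positivity
    rw [hrdef]; linarith
  have harg' : ((k : ℕ) + 1 : ℝ) * 2 ^ (k + 1) / ε = r * (2 * x) := by
    rw [hrdef, hxdef]; field_simp; ring
  obtain ⟨a, hadef⟩ : ∃ a : ℝ, a = c₃ * (r * (2 * x)) * Real.log (r * (2 * x)) := ⟨_, rfl⟩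
  have hIk1 : Ithr c₃ ε (k + 1) = a ^ (2 ^ k) := by
    unfold Ithr
    simp only [Nat.add_sub_cancel]
    push_cast
    rw [harg', ← hadef]
  -- a ≥ r * b
  have hlog' : Real.log (2 * x) ≤ Real.log (r * (2 * x)) := by
    apply Real.log_le_log (by linarith)
    nlinarith
  have hab : r * b ≤ a := by
    rw [hadef, hbdef]
    nlinarith [mul_nonneg (mul_nonneg (by linarith : (0:ℝ) ≤ c₃) (by linarith : (0:ℝ) ≤ r))
      (by linarith : (0:ℝ) ≤ 2 * x)]
  -- r^(2^k) ≥ 4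
  have hrk : (2 : ℝ) ≤ r ^ k := by
    have hnn : (0:ℝ) ≤ 1 / (k : ℝ) := by positivity
    have h := one_add_mul_le_pow (a := 1 / (k : ℝ)) (by linarith) k
    have hkk : (k : ℝ) * (1 / (k : ℝ)) = 1 := by field_simp
    rw [hkk] at h
    rw [hrdef]; linarith
  have hr4 : (4 : ℝ) ≤ r ^ (2 ^ k) := by
    have h2 : r ^ (2 * k) ≤ r ^ (2 ^ k) :=
      pow_le_pow_right₀ hr1 (two_mul_le_two_pow' hk)
    have h3 : r ^ (2 * k) = (r ^ k) ^ 2 := by rw [mul_comm, pow_mul]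
    nlinarith
  -- exponent arithmetic
  have hexp : 2 ^ (k - 1) * 2 = 2 ^ k := by
    rw [← pow_succ]; congr 1; omega
  have hbe : (k : ℝ) ≤ b ^ (2 ^ (k - 1)) :=
    le_trans hbk (le_self_pow₀ hb1 (by positivity))
  have hbe0 : (0 : ℝ) < b ^ (2 ^ (k - 1)) := by positivity
  have step1 : (Ithr c₃ (ε / 2) k + (k : ℝ)) ^ 2 ≤ 4 * b ^ (2 ^ k) := by
    rw [hIk]
    have h4 : 4 * b ^ (2 ^ k) = (2 * b ^ (2 ^ (k - 1))) ^ 2 := by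
      rw [mul_pow, ← pow_mul, hexp]; ring
    rw [h4]
    have hle : b ^ (2 ^ (k - 1)) + (k : ℝ) ≤ 2 * b ^ (2 ^ (k - 1)) := by linarith
    exact pow_le_pow_left₀ (by positivity) hle 2
  have step2 : 4 * b ^ (2 ^ k) ≤ (r * b) ^ (2 ^ k) := by
    rw [mul_pow]
    exact mul_le_mul_of_nonneg_right hr4 (by positivity)
  have hrb0 : (0 : ℝ) ≤ r * b := mul_nonneg (by linarith) (le_of_lt hb0)
  have step3 : (r * b) ^ (2 ^ k) ≤ a ^ (2 ^ k) := pow_le_pow_left₀ hrb0 hab (2 ^ k)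
  rw [ge_iff_le, hIk1]
  calc (Ithr c₃ (ε / 2) k + (k : ℝ)) ^ 2 ≤ 4 * b ^ (2 ^ k) := step1
    _ ≤ (r * b) ^ (2 ^ k) := step2
    _ ≤ a ^ (2 ^ k) := step3
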